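/- arXiv:1008.2099 — 4 statements merged into one kernel-verified Lean document; each statement's English description precedes it below -/
import Mathlib

section
/- Let H be self-adjoint on ℋ, λ₀ an eigenvalue of finite multiplicity with eigenprojection P₀, H̄ = H + P₀, and W a bounded self-adjoint operator. For z with Im z ≠ 0 define Q(z,W) = P₀ (H̄ + W − z)⁻¹ P₀. Then I − Q(z,W) is invertible on ℋ. -/
/-!
Since `y = (H + P₀ + W - z) (R y)` with `H + P₀ + W` symmetric, `Im ⟪y, R y⟫ = Im z · ‖R y‖²`.
If `Q x = x`, then `x ∈ ran P₀` and `⟪x, R x⟫ = ⟪x, P₀ R x⟫ = ‖x‖²` is real, so `R x = 0` and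
`x = P₀ R x = 0`. Hence `1` is not an eigenvalue of the finite-rank, hence compact, operator `Q`,
and the Fredholm alternative makes `1 - Q` invertible.
-/

theorem IsCompactOperator.isUnit_one_sub {𝕜 X : Type*} [NontriviallyNormedField 𝕜]
    [NormedAddCommGroup X] [NormedSpace 𝕜 X] [CompleteSpace X] {T : X →L[𝕜] X}
    (hT : IsCompactOperator T) (hfix : ∀ x, T x = x → x = 0) : IsUnit (1 - T) := by
  have hres : (1 : 𝕜) ∈ resolventSet 𝕜 T := by
    refine (hT.hasEigenvalue_or_mem_resolventSet one_ne_zero).resolve_left fun hev => ?_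
    obtain ⟨v, hv⟩ := hev.exists_hasEigenvector
    exact hv.2 (hfix v (by simpa using hv.apply_eq_smul))
  simpa using spectrum.mem_resolventSet_iff.mp hres

theorem Submodule.isCompactOperator_starProjection {𝕜 E : Type*} [RCLike 𝕜]
    [NormedAddCommGroup E] [InnerProductSpace 𝕜 E] (K : Submodule 𝕜 E) [FiniteDimensional 𝕜 K] :
    IsCompactOperator K.starProjection :=
  (isCompactOperator_of_locallyCompactSpace_dom K.orthogonalProjectionOnto).clm_comp K.subtypeL

section

variable {E : Type*} [NormedAddCommGroup E] [InnerProductSpace ℂ E]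

theorem Submodule.eq_zero_of_starProjection_comp_starProjection_apply_eq_self
    (K : Submodule ℂ E) [K.HasOrthogonalProjection] {R : E →L[ℂ] E}
    (hR : ∀ y, (inner ℂ y (R y)).im = 0 → R y = 0) {x : E}
    (hx : K.starProjection (R (K.starProjection x)) = x) : x = 0 := by
  have hPx : K.starProjection x = x :=
    K.starProjection_eq_self_iff.mpr (hx ▸ K.starProjection_apply_mem _)
  rw [hPx] at hx
  have hinner : inner ℂ x (R x) = inner ℂ x x := by
    rw [← hPx, K.inner_starProjection_left_eq_right, hPx, hx]
  rw [← hx, hR x (by rw [hinner]; exact inner_self_im (𝕜 := ℂ) x), map_zero]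

theorem im_inner_add_sub_smul_self {D : Submodule ℂ E} {H : D →ₗ[ℂ] E}
    (hH : ∀ x y : D, inner ℂ (H x) (y : E) = inner ℂ (x : E) (H y))
    {B : E →ₗ[ℂ] E} (hB : B.IsSymmetric) (z : ℂ) (ψ : D) :
    (inner ℂ (H ψ + B ψ - z • (ψ : E)) (ψ : E)).im = z.im * ‖(ψ : E)‖ ^ 2 := by
  have hHψ : (inner ℂ (H ψ) (ψ : E)).im = 0 :=
    Complex.conj_eq_iff_im.mp (by rw [inner_conj_symm]; exact (hH ψ ψ).symm)
  have hBψ : (inner ℂ (B ψ) (ψ : E)).im = 0 := hB.im_inner_apply_self _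
  rw [inner_sub_left, inner_add_left, inner_smul_left, inner_self_eq_norm_sq_to_K,
    Complex.sub_im, Complex.add_im, hHψ, hBψ]
  simp [← Complex.ofReal_pow]

end

theorem stmt_1_general {ℋ : Type*} [NormedAddCommGroup ℋ] [InnerProductSpace ℂ ℋ] [CompleteSpace ℋ]
    (D : Submodule ℂ ℋ) (H : D →ₗ[ℂ] ℋ)
    (hsym : ∀ x y : D, (inner ℂ (H x) (y : ℋ) : ℂ) = inner ℂ (x : ℋ) (H y))
    (K : Submodule ℂ ℋ) [FiniteDimensional ℂ K]
    (P₀ : ℋ →L[ℂ] ℋ) (hP₀ : ∀ x : ℋ, P₀ x = (K.orthogonalProjection x : ℋ))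
    (W : ℋ →L[ℂ] ℋ) (hW : IsSelfAdjoint W)
    (z : ℂ) (hz : z.im ≠ 0)
    (R : ℋ →L[ℂ] ℋ)  -- R = (H̄ + W − z)⁻¹
    (hR₂ : ∀ y : ℋ, ∃ hy : R y ∈ D,
      H ⟨R y, hy⟩ + P₀ (R y) + W (R y) - z • (R y) = y) :
    IsUnit (1 - P₀ ∘L R ∘L P₀ : ℋ →L[ℂ] ℋ) := by
  obtain rfl : P₀ = K.starProjection := ContinuousLinearMap.ext hP₀
  have hB : ((K.starProjection + W : ℋ →L[ℂ] ℋ) : ℋ →ₗ[ℂ] ℋ).IsSymmetric :=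
    K.starProjection_isSymmetric.add hW.isSymmetric
  have hR : ∀ y, (inner ℂ y (R y)).im = 0 → R y = 0 := by
    intro y hy
    obtain ⟨hψ, hRy⟩ := hR₂ y
    have him := im_inner_add_sub_smul_self hsym hB z ⟨R y, hψ⟩
    simp only [ContinuousLinearMap.coe_coe, add_apply, ← add_assoc, hRy, hy] at him
    simpa [hz] using him
  exact (K.isCompactOperator_starProjection.comp_clm (R ∘L K.starProjection)).isUnit_one_sub
    fun x hx => K.eq_zero_of_starProjection_comp_starProjection_apply_eq_self hR hx

theorem stmt_1 {ℋ : Type*} [NormedAddCommGroup ℋ] [InnerProductSpace ℂ ℋ] [CompleteSpace ℋ]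
    (D : Submodule ℂ ℋ) (H : D →ₗ[ℂ] ℋ)
    (hsym : ∀ x y : D, (inner ℂ (H x) (y : ℋ) : ℂ) = inner ℂ (x : ℋ) (H y))
    (l₀ : ℝ) (K : Submodule ℂ ℋ) [FiniteDimensional ℂ K]
    (hK : ∀ x : ℋ, x ∈ K ↔ ∃ hx : x ∈ D, H ⟨x, hx⟩ = (l₀ : ℂ) • x)
    (P₀ : ℋ →L[ℂ] ℋ) (hP₀ : ∀ x : ℋ, P₀ x = (K.orthogonalProjection x : ℋ))
    (W : ℋ →L[ℂ] ℋ) (hW : IsSelfAdjoint W)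
    (z : ℂ) (hz : z.im ≠ 0)
    (R : ℋ →L[ℂ] ℋ)  -- R = (H̄ + W − z)⁻¹
    (hR₁ : ∀ ψ : D, R (H ψ + P₀ (ψ : ℋ) + W (ψ : ℋ) - z • (ψ : ℋ)) = ψ)
    (hR₂ : ∀ y : ℋ, ∃ hy : R y ∈ D,
      H ⟨R y, hy⟩ + P₀ (R y) + W (R y) - z • (R y) = y) :
    IsUnit (1 - P₀ ∘L R ∘L P₀ : ℋ →L[ℂ] ℋ) :=
  stmt_1_general D H hsym K P₀ hP₀ W hW z hz R hR₂
end

section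
/- With the notation above, for Im z ≠ 0 the resolvent identity (H + W − z)⁻¹ P₀ (I − Q(z,W)) = (H̄ + W − z)⁻¹ P₀ holds, and consequently (H + W − z)⁻¹ = (H̄ + W − z)⁻¹ + (H̄ + W − z)⁻¹ P₀ (I − Q(z,W))⁻¹ P₀ (H̄ + W − z)⁻¹. -/
/-!
Since `H + W − z = (H̄ + W − z) − P₀` on the domain, applying `(H + W − z)⁻¹` to
`(H̄ + W − z) ψ − P₀ ψ` for `ψ = (H̄ + W − z)⁻¹ y` gives `R (1 − P₀ R̄) = R̄`. Everything else is
algebra in the ring of bounded operators: right-multiplying by `P₀` and using `P₀² = P₀` gives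
the first identity, and inverting `1 − P₀ R̄ P₀` there, then adding `R P₀ R̄`, gives the second.
-/

section ResolventAlgebra

variable {A : Type*} [Ring A] {P R Rbar S : A}

theorem mul_mul_one_sub_eq_of_mul_one_sub_eq (hP : IsIdempotentElem P)
    (hR : R * (1 - P * Rbar) = Rbar) :
    R * P * (1 - P * Rbar * P) = Rbar * P := by
  calc R * P * (1 - P * Rbar * P) = R * (P - P * P * Rbar * P) := by noncomm_ring
    _ = R * (1 - P * Rbar) * P := by rw [hP.eq]; noncomm_ring
    _ = Rbar * P := by rw [hR]

theorem eq_add_mul_of_mul_one_sub_eq (hP : IsIdempotentElem P)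
    (hR : R * (1 - P * Rbar) = Rbar) (hS : (1 - P * Rbar * P) * S = 1) :
    R = Rbar + Rbar * P * S * P * Rbar := by
  have hRP : R * P = Rbar * P * S * P := by
    calc R * P = R * P * (1 - P * Rbar * P) * S * P := by
          rw [mul_assoc (R * P), hS, mul_one, mul_assoc, hP.eq]
      _ = Rbar * P * S * P := by rw [mul_mul_one_sub_eq_of_mul_one_sub_eq hP hR]
  calc R = R * (1 - P * Rbar) + R * P * Rbar := by noncomm_ring
    _ = Rbar + Rbar * P * S * P * Rbar := by rw [hR, hRP]

end ResolventAlgebra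

theorem ContinuousLinearMap.mul_one_sub_eq_of_isRightInverse_add
    {𝕜 E : Type*} [Ring 𝕜] [AddCommGroup E] [Module 𝕜 E] [TopologicalSpace E]
    [IsTopologicalAddGroup E] {D : Submodule 𝕜 E} (T : D →ₗ[𝕜] E) {P R Rbar : E →L[𝕜] E}
    (hRbar : ∀ y, ∃ hy : Rbar y ∈ D, T ⟨Rbar y, hy⟩ + P (Rbar y) = y)
    (hR : ∀ ψ : D, R (T ψ) = ψ) :
    R * (1 - P * Rbar) = Rbar := by
  ext y
  obtain ⟨hy, hTy⟩ := hRbar y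
  calc R (y - P (Rbar y)) = R (T ⟨Rbar y, hy⟩) := by rw [eq_sub_of_add_eq hTy]
    _ = Rbar y := hR _

theorem stmt_2_general {ℋ : Type*} [NormedAddCommGroup ℋ] [InnerProductSpace ℂ ℋ]
    (D : Submodule ℂ ℋ) (H : D →ₗ[ℂ] ℋ)
    (K : Submodule ℂ ℋ) [FiniteDimensional ℂ K]
    (P₀ : ℋ →L[ℂ] ℋ) (hP₀ : ∀ x : ℋ, P₀ x = (Submodule.orthogonalProjection K x : ℋ))
    (W : ℋ →L[ℂ] ℋ)
    (z : ℂ)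
    (Rbar : ℋ →L[ℂ] ℋ)  -- Rbar = (H̄ + W − z)⁻¹
    (hRbar₂ : ∀ y : ℋ, ∃ hy : Rbar y ∈ D,
      H ⟨Rbar y, hy⟩ + P₀ (Rbar y) + W (Rbar y) - z • (Rbar y) = y)
    (R : ℋ →L[ℂ] ℋ)  -- R = (H + W − z)⁻¹
    (hRfull₁ : ∀ ψ : D, R (H ψ + W (ψ : ℋ) - z • (ψ : ℋ)) = ψ)
    (S : ℋ →L[ℂ] ℋ)  -- S = (I − Q(z,W))⁻¹
    (hS₁ : (1 - P₀ ∘L Rbar ∘L P₀) ∘L S = 1) :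
    R ∘L P₀ ∘L (1 - P₀ ∘L Rbar ∘L P₀) = Rbar ∘L P₀ ∧
      R = Rbar + Rbar ∘L P₀ ∘L S ∘L P₀ ∘L Rbar := by
  have hP : IsIdempotentElem P₀ := by
    have : P₀ = K.starProjection := ContinuousLinearMap.ext hP₀
    exact this ▸ K.isIdempotentElem_starProjection
  let T : D →ₗ[ℂ] ℋ := H + (W : ℋ →ₗ[ℂ] ℋ) ∘ₗ D.subtype - z • D.subtype
  have hR : R * (1 - P₀ * Rbar) = Rbar := by
    refine ContinuousLinearMap.mul_one_sub_eq_of_isRightInverse_add T (fun y => ?_) hRfull₁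
    obtain ⟨hy, hTy⟩ := hRbar₂ y
    refine ⟨hy, Eq.trans ?_ hTy⟩
    simp only [T, LinearMap.sub_apply, LinearMap.add_apply, LinearMap.comp_apply,
      LinearMap.smul_apply, Submodule.subtype_apply, ContinuousLinearMap.coe_coe]
    abel
  simp only [← ContinuousLinearMap.mul_def, ← mul_assoc] at hS₁ ⊢
  exact ⟨mul_mul_one_sub_eq_of_mul_one_sub_eq hP hR, eq_add_mul_of_mul_one_sub_eq hP hR hS₁⟩

theorem stmt_2 {ℋ : Type*} [NormedAddCommGroup ℋ] [InnerProductSpace ℂ ℋ] [CompleteSpace ℋ]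
    (D : Submodule ℂ ℋ) (H : D →ₗ[ℂ] ℋ)
    (hsym : ∀ x y : D, (inner ℂ (H x) (y : ℋ) : ℂ) = inner ℂ (x : ℋ) (H y))
    (l₀ : ℝ) (K : Submodule ℂ ℋ) [FiniteDimensional ℂ K]
    (hK : ∀ x : ℋ, x ∈ K ↔ ∃ hx : x ∈ D, H ⟨x, hx⟩ = (l₀ : ℂ) • x)
    (P₀ : ℋ →L[ℂ] ℋ) (hP₀ : ∀ x : ℋ, P₀ x = (Submodule.orthogonalProjection K x : ℋ))
    (W : ℋ →L[ℂ] ℋ) (hW : IsSelfAdjoint W)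
    (z : ℂ) (hz : z.im ≠ 0)
    (Rbar : ℋ →L[ℂ] ℋ)  -- Rbar = (H̄ + W − z)⁻¹
    (hRbar₁ : ∀ ψ : D, Rbar (H ψ + P₀ (ψ : ℋ) + W (ψ : ℋ) - z • (ψ : ℋ)) = ψ)
    (hRbar₂ : ∀ y : ℋ, ∃ hy : Rbar y ∈ D,
      H ⟨Rbar y, hy⟩ + P₀ (Rbar y) + W (Rbar y) - z • (Rbar y) = y)
    (R : ℋ →L[ℂ] ℋ)  -- R = (H + W − z)⁻¹
    (hRfull₁ : ∀ ψ : D, R (H ψ + W (ψ : ℋ) - z • (ψ : ℋ)) = ψ)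
    (hRfull₂ : ∀ y : ℋ, ∃ hy : R y ∈ D,
      H ⟨R y, hy⟩ + W (R y) - z • (R y) = y)
    (S : ℋ →L[ℂ] ℋ)  -- S = (I − Q(z,W))⁻¹
    (hS₁ : (1 - P₀ ∘L Rbar ∘L P₀) ∘L S = 1)
    (hS₂ : S ∘L (1 - P₀ ∘L Rbar ∘L P₀) = 1) :
    R ∘L P₀ ∘L (1 - P₀ ∘L Rbar ∘L P₀) = Rbar ∘L P₀ ∧
      R = Rbar + Rbar ∘L P₀ ∘L S ∘L P₀ ∘L Rbar :=
  stmt_2_general D H K P₀ hP₀ W z Rbar hRbar₂ R hRfull₁ S hS₁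
end

section
/- Let f : ℝⁿ → E be a function into a Banach space such that for every r ≤ m and every non-decreasing multi-sequence l₁ ≤ l₂ ≤ … ≤ l_r the iterated partial derivative ∂ʳf/∂x_{l₁}…∂x_{l_r} exists and is continuous. Then f is of class Cᵐ (all mixed partial derivatives up to order m exist, are continuous, and are independent of the order of differentiation). -/
/-!
The family `S := precompSort D`, `S r l = D r (l ∘ Tuple.sort l)`, extends `D` to all
multi-indices `l` and depends only on the multiset of entries of `l`. The heart of the proof is
that `∂ⱼ (S r l) = S (r + 1) (snoc l j)` for every `j`, by induction on `r`. If `j` is at least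
every entry of `l` this is the hypothesis. Otherwise write the sorted `l` as `t` followed by its
largest entry `a > j`; then `∂ⱼ ∂ₐ (S r' t)` is obtained from
`∂ₐ ∂ⱼ (S r' t) = ∂ₐ S (r' + 1) (snoc t j)`, which exists and is continuous by the hypotheses,
through Peano's form of the symmetry of mixed partial derivatives.

Once every `S r l` with `r ≤ m` is a continuous partial derivative of the previous ones, `f` is
`Cᵐ` by induction on `m`: continuous first partials make `f` differentiable, and the coordinates
`S 1 ![i]` of its derivative carry the same structure one order lower.
-/

open Set Asymptotics Topology

section LineDeriv
variable {V E : Type*} [NormedAddCommGroup V] [NormedSpace ℝ V]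
  [NormedAddCommGroup E] [NormedSpace ℝ E]

theorem HasLineDerivAt.hasDerivAt_add_smul {F : V → E} {F' : E} {x v : V} {t : ℝ}
    (h : HasLineDerivAt ℝ F F' (x + t • v) v) :
    HasDerivAt (fun τ : ℝ => F (x + τ • v)) F' t := by
  have h' : HasDerivAt (fun s : ℝ => F (x + t • v + s • v)) F' (t + -t) := by
    rwa [add_neg_cancel]
  simpa [add_assoc, ← add_smul] using h'.comp_add_const t (-t)

theorem norm_sub_sub_smul_le_of_hasLineDerivAt {F : V → E} {G : ℝ → E} {x v : V} {t ε : ℝ}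
    {c : E} (hF : ∀ s, |s| ≤ |t| → HasLineDerivAt ℝ F (G s) (x + s • v) v)
    (hG : ∀ s, |s| ≤ |t| → ‖G s - c‖ ≤ ε) :
    ‖F (x + t • v) - F x - t • c‖ ≤ ε * |t| := by
  have hs : ∀ s ∈ Icc (-|t|) |t|, |s| ≤ |t| := fun s hs => abs_le.2 hs
  have key := (convex_Icc (-|t|) |t|).norm_image_sub_le_of_norm_hasDerivWithin_le
    (f := fun τ => F (x + τ • v) - τ • c)
    (fun s hs' => (((hF s (hs s hs')).hasDerivAt_add_smul).sub
      ((hasDerivAt_id s).smul_const c)).hasDerivWithinAt)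
    (fun s hs' => by simpa using hG s (hs s hs'))
    (x := 0) (y := t) (by simp) (by simp [neg_abs_le, le_abs_self])
  simpa [sub_right_comm] using key

theorem HasLineDerivAt.comp_add_const {F : V → E} {F' : E} {x v : V} (y : V)
    (h : HasLineDerivAt ℝ F F' (x + y) v) :
    HasLineDerivAt ℝ (fun z => F (z + y)) F' x v := by
  unfold HasLineDerivAt at h ⊢
  simpa only [add_right_comm] using h

theorem norm_sub_sub_sub_smul_le_of_hasLineDerivAt {u q w : V → E} {x v₁ v₂ : V} {t h ε : ℝ}
    {c : E} (hq : ∀ y, HasLineDerivAt ℝ u (q y) y v₁) (hw : ∀ y, HasLineDerivAt ℝ q (w y) y v₂)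
    (hb : ∀ τ s, |τ| ≤ |t| → |s| ≤ |h| → ‖w (x + τ • v₁ + s • v₂) - c‖ ≤ ε) :
    ‖u (x + t • v₁ + h • v₂) - u (x + t • v₁) - (u (x + h • v₂) - u x) - t • h • c‖ ≤
      ε * |h| * |t| := by
  have hinner : ∀ τ, |τ| ≤ |t| →
      ‖q (x + τ • v₁ + h • v₂) - q (x + τ • v₁) - h • c‖ ≤ ε * |h| :=
    fun τ hτ => norm_sub_sub_smul_le_of_hasLineDerivAt (fun s _ => hw _) (hb τ · hτ)
  exact norm_sub_sub_smul_le_of_hasLineDerivAt (F := fun z => u (z + h • v₂) - u z)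
    (fun s _ => ((hq _).comp_add_const (h • v₂)).sub (hq _)) hinner

/- Peano's form of Schwarz's theorem: only `∂₂ ∂₁ u = w` is assumed to exist and be continuous.
By the mean value inequality, applied twice, the double difference of `u` at steps `t, h` is
`t h w x + o(|t h|)`; dividing by `h` and letting `h → 0` first gives `∂₁ p = w x`. -/
theorem hasLineDerivAt_symm_of_continuousAt {u p q w : V → E} {x v₁ v₂ : V}
    (hp : ∀ y, HasLineDerivAt ℝ u (p y) y v₂) (hq : ∀ y, HasLineDerivAt ℝ u (q y) y v₁)
    (hw : ∀ y, HasLineDerivAt ℝ q (w y) y v₂) (hwc : ContinuousAt w x) :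
    HasLineDerivAt ℝ p (w x) x v₁ := by
  rw [HasLineDerivAt, hasDerivAt_iff_isLittleO_nhds_zero, isLittleO_iff]
  intro ε hε
  have hwc' : ContinuousAt (fun z : ℝ × ℝ => w (x + z.1 • v₁ + z.2 • v₂)) 0 :=
    hwc.comp_of_eq (by fun_prop) (by simp)
  obtain ⟨η, hη, hwη⟩ := Metric.continuousAt_iff.1 hwc' ε hε
  have hb : ∀ τ s, |τ| < η → |s| < η → ‖w (x + τ • v₁ + s • v₂) - w x‖ ≤ ε := by
    intro τ s hτ hs
    have := hwη (x := (τ, s)) (by simpa [Prod.dist_eq] using ⟨hτ, hs⟩)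
    simpa [dist_eq_norm] using this.le
  filter_upwards [Metric.ball_mem_nhds (0 : ℝ) hη] with t ht
  rw [Metric.mem_ball, Real.dist_0_eq_abs] at ht
  set φ : ℝ → E := fun h => u (x + t • v₁ + h • v₂) - u (x + h • v₂) - (h * t) • w x
  have hφ : HasDerivAt φ (p (x + t • v₁) - p x - t • w x) 0 :=
    ((hp (x + t • v₁)).sub (hp x)).sub ((hasDerivAt_mul_const t).smul_const (w x))
  have hlip : ∀ᶠ h in 𝓝 (0 : ℝ), ‖φ h - φ 0‖ ≤ ε * |t| * ‖h - 0‖ := by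
    filter_upwards [Metric.ball_mem_nhds (0 : ℝ) hη] with h hh
    rw [Metric.mem_ball, Real.dist_0_eq_abs] at hh
    have := norm_sub_sub_sub_smul_le_of_hasLineDerivAt (t := t) (h := h) (x := x) hq hw
      (fun τ s hτ hs => hb τ s (hτ.trans_lt ht) (hs.trans_lt hh))
    calc ‖φ h - φ 0‖
        = ‖u (x + t • v₁ + h • v₂) - u (x + t • v₁) - (u (x + h • v₂) - u x) - t • h • w x‖ := by
          congr 1
          simp only [φ, mul_smul, smul_comm h t, zero_smul, add_zero, sub_zero]
          abel
      _ ≤ ε * |h| * |t| := this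
      _ = ε * |t| * ‖h - 0‖ := by rw [sub_zero, Real.norm_eq_abs]; ring
  simpa only [zero_add, zero_smul, add_zero, Real.norm_eq_abs]
    using hφ.le_of_lip' (by positivity) hlip

end LineDeriv

section Partials
variable {n : ℕ} {E : Type*} [NormedAddCommGroup E] [NormedSpace ℝ E]

namespace Pi

def truncate (k : ℕ) (v : Fin n → ℝ) : Fin n → ℝ := fun j => if (j : ℕ) < k then v j else 0

@[simp] theorem truncate_zero (v : Fin n → ℝ) : truncate 0 v = 0 := by
  ext j; simp [truncate]

theorem truncate_of_le {k : ℕ} (hk : n ≤ k) (v : Fin n → ℝ) : truncate k v = v := by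
  ext j; simp [truncate, j.isLt.trans_le hk]

theorem truncate_succ (v : Fin n → ℝ) (i : Fin n) :
    truncate (i + 1) v = truncate i v + v i • Pi.single i 1 := by
  ext j
  rcases lt_trichotomy j i with h | rfl | h
  · simp [truncate, h, h.ne, Nat.lt_succ_of_lt (Fin.lt_def.1 h)]
  · simp [truncate]
  · simp [truncate, h.ne', not_lt.2 (Fin.le_def.1 h.le), Nat.not_lt.2 (Fin.lt_def.1 h)]

theorem norm_truncate_add_smul_single_le (v : Fin n → ℝ) (i : Fin n) {s : ℝ} (hs : |s| ≤ |v i|) :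
    ‖truncate i v + s • Pi.single i 1‖ ≤ ‖v‖ := by
  refine (pi_norm_le_iff_of_nonneg (norm_nonneg v)).2 fun j => ?_
  rcases lt_trichotomy j i with h | rfl | h
  · simpa [truncate, h, h.ne] using norm_le_pi_norm v j
  · simpa [truncate] using hs.trans (norm_le_pi_norm v j)
  · simp [truncate, h.ne', not_lt.2 (Fin.le_def.1 h.le)]

end Pi

theorem isLittleO_sub_truncate_succ {f g : (Fin n → ℝ) → E} {i : Fin n} {x : Fin n → ℝ}
    (hd : ∀ y, HasLineDerivAt ℝ f (g y) y (Pi.single i 1)) (hc : ContinuousAt g x) :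
    (fun v => f (x + Pi.truncate (i + 1) v) - f (x + Pi.truncate i v) - v i • g x)
      =o[𝓝 0] fun v => v := by
  refine isLittleO_iff.2 fun ε hε => ?_
  obtain ⟨δ, hδ, hgδ⟩ := Metric.continuousAt_iff.1 hc ε hε
  filter_upwards [Metric.ball_mem_nhds 0 hδ] with v hv
  rw [mem_ball_zero_iff] at hv
  have hvi : |v i| ≤ ‖v‖ := norm_le_pi_norm v i
  rw [Pi.truncate_succ, ← add_assoc]
  refine (norm_sub_sub_smul_le_of_hasLineDerivAt (fun s _ => hd _) fun s hs => ?_).trans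
    (mul_le_mul_of_nonneg_left hvi hε.le)
  rw [← dist_eq_norm]
  refine (hgδ ?_).le
  rw [dist_eq_norm, add_assoc, add_sub_cancel_left]
  exact (Pi.norm_truncate_add_smul_single_le v i hs).trans_lt hv

theorem hasFDerivAt_of_continuousAt_partials {f : (Fin n → ℝ) → E}
    {g : Fin n → (Fin n → ℝ) → E} {x : Fin n → ℝ}
    (hd : ∀ i y, HasLineDerivAt ℝ f (g i y) y (Pi.single i 1)) (hc : ∀ i, ContinuousAt (g i) x) :
    HasFDerivAt f (∑ i, (ContinuousLinearMap.proj (R := ℝ) i).smulRight (g i x)) x := by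
  rw [hasFDerivAt_iff_isLittleO_nhds_zero]
  refine (IsLittleO.sum (s := Finset.univ) fun i _ =>
    isLittleO_sub_truncate_succ (hd i) (hc i)).congr_left fun v => ?_
  have htel : ∑ i : Fin n, (f (x + Pi.truncate (i + 1) v) - f (x + Pi.truncate i v)) =
      f (x + v) - f x := by
    rw [Fin.sum_univ_eq_sum_range
        (fun k => f (x + Pi.truncate (k + 1) v) - f (x + Pi.truncate k v)),
      Finset.sum_range_sub (fun k => f (x + Pi.truncate k v)), Pi.truncate_zero,
      Pi.truncate_of_le le_rfl, add_zero]
  simp only [Finset.sum_apply, Finset.sum_sub_distrib, htel, sum_apply,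
    ContinuousLinearMap.smulRight_apply, ContinuousLinearMap.proj_apply]

theorem contDiff_succ_of_partials {m : ℕ} {f : (Fin n → ℝ) → E} {g : Fin n → (Fin n → ℝ) → E}
    (hd : ∀ i y, HasLineDerivAt ℝ f (g i y) y (Pi.single i 1)) (hg : ∀ i, ContDiff ℝ m (g i)) :
    ContDiff ℝ (m + 1) f :=
  contDiff_succ_iff_hasFDerivAt.2
    ⟨fun x => ∑ i, (ContinuousLinearMap.proj (R := ℝ) i).smulRight (g i x),
      ContDiff.sum fun i _ =>
        (ContinuousLinearMap.smulRightL ℝ (Fin n → ℝ) E (ContinuousLinearMap.proj i)).contDiff.comp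
          (hg i),
      fun _ => hasFDerivAt_of_continuousAt_partials hd fun i => (hg i).continuous.continuousAt⟩

theorem contDiff_of_hasLineDerivAt_snoc {f : (Fin n → ℝ) → E} (m : ℕ)
    (S : (r : ℕ) → (Fin r → Fin n) → (Fin n → ℝ) → E) (hS0 : ∀ l, S 0 l = f)
    (hS : ∀ r < m, ∀ l j x, HasLineDerivAt ℝ (S r l) (S (r + 1) (Fin.snoc l j) x) x
      (Pi.single j 1))
    (hSc : ∀ r ≤ m, ∀ l, Continuous (S r l)) :
    ContDiff ℝ m f := by
  induction m generalizing f S with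
  | zero => exact contDiff_zero.2 (hS0 ![] ▸ hSc 0 le_rfl ![])
  | succ m ih =>
    have hd : ∀ i y, HasLineDerivAt ℝ f (S 1 ![i] y) y (Pi.single i 1) := fun i y => by
      simpa [hS0] using hS 0 (by omega) ![] i y
    refine contDiff_succ_of_partials hd fun i => ih (fun r l => S (r + 1) (Fin.cons i l))
      (fun l => by rw [Subsingleton.elim l ![]]; rfl) (fun r hr l j x => ?_)
      fun r hr l => hSc _ (by omega) _
    simpa [Fin.cons_snoc_eq_snoc_cons] using hS (r + 1) (by omega) (Fin.cons i l) j x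

end Partials

theorem List.ofFn_snoc {α : Type*} {r : ℕ} (l : Fin r → α) (a : α) :
    List.ofFn (Fin.snoc l a) = List.ofFn l ++ [a] := by
  rw [List.ofFn_succ']; simp

section SortedIndices
variable {α X : Type*} [LinearOrder α]

theorem Fin.monotone_snoc {r : ℕ} {l : Fin r → α} (hl : Monotone l) {a : α} (ha : ∀ i, l i ≤ a) :
    Monotone (Fin.snoc l a : Fin (r + 1) → α) := by
  intro p q hpq
  induction q using Fin.lastCases with
  | last => induction p using Fin.lastCases <;> simp [ha]
  | cast q =>
    induction p using Fin.lastCases with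
    | last => exact absurd hpq (Fin.castSucc_lt_last q).not_ge
    | cast p => simpa using hl (Fin.castSucc_le_castSucc_iff.1 hpq)

def precompSort (D : (r : ℕ) → (Fin r → α) → X) (r : ℕ) (l : Fin r → α) : X :=
  D r (l ∘ Tuple.sort l)

variable {D : (r : ℕ) → (Fin r → α) → X} {r : ℕ}

theorem precompSort_of_monotone {l : Fin r → α} (hl : Monotone l) : precompSort D r l = D r l := by
  rw [precompSort, Tuple.sort_eq_refl_iff_monotone.2 hl]; rfl

theorem precompSort_eq_of_perm {l₁ l₂ : Fin r → α} (h : (List.ofFn l₁).Perm (List.ofFn l₂)) :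
    precompSort D r l₁ = precompSort D r l₂ := by
  have hsorted : ∀ l : Fin r → α, (List.ofFn (l ∘ Tuple.sort l)).SortedLE :=
    fun l => List.sortedLE_ofFn_iff.2 (Tuple.monotone_sort l)
  have hperm : ∀ l : Fin r → α, (List.ofFn (l ∘ Tuple.sort l)).Perm (List.ofFn l) :=
    fun l => (Tuple.sort l).ofFn_comp_perm l
  unfold precompSort
  congr 1
  exact List.ofFn_injective <| List.Perm.eq_of_sortedLE (hsorted l₁) (hsorted l₂)
    ((hperm l₁).trans (h.trans (hperm l₂).symm))

end SortedIndices

section Commutation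
variable {n m : ℕ} {E : Type*} [NormedAddCommGroup E] [NormedSpace ℝ E]
  {D : (r : ℕ) → (Fin r → Fin n) → (Fin n → ℝ) → E}

theorem hasLineDerivAt_precompSort_snoc_of_le
    (hderiv : ∀ r : ℕ, r < m → ∀ l : Fin (r + 1) → Fin n, Monotone l → ∀ x : Fin n → ℝ,
      HasLineDerivAt ℝ (D r (l ∘ Fin.castSucc)) (D (r + 1) l x) x (Pi.single (l (Fin.last r)) 1))
    {r : ℕ} (hr : r < m) {l : Fin r → Fin n} {j : Fin n} (hj : ∀ i, l i ≤ j) (x : Fin n → ℝ) :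
    HasLineDerivAt ℝ (precompSort D r l) (precompSort D (r + 1) (Fin.snoc l j) x) x
      (Pi.single j 1) := by
  have hs : Monotone (Fin.snoc (l ∘ Tuple.sort l) j) :=
    Fin.monotone_snoc (Tuple.monotone_sort l) fun i => hj _
  have hperm : (List.ofFn (Fin.snoc (l ∘ Tuple.sort l) j)).Perm (List.ofFn (Fin.snoc l j)) := by
    rw [List.ofFn_snoc, List.ofFn_snoc]
    exact ((Tuple.sort l).ofFn_comp_perm l).append_right _
  rw [← precompSort_eq_of_perm hperm, precompSort_of_monotone hs]
  simpa [precompSort] using hderiv r hr _ hs x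

theorem hasLineDerivAt_precompSort_snoc
    (hderiv : ∀ r : ℕ, r < m → ∀ l : Fin (r + 1) → Fin n, Monotone l → ∀ x : Fin n → ℝ,
      HasLineDerivAt ℝ (D r (l ∘ Fin.castSucc)) (D (r + 1) l x) x (Pi.single (l (Fin.last r)) 1))
    (hcont : ∀ r : ℕ, r ≤ m → ∀ l : Fin r → Fin n, Monotone l → Continuous (D r l)) :
    ∀ r < m, ∀ (l : Fin r → Fin n) (j : Fin n) (x : Fin n → ℝ),
      HasLineDerivAt ℝ (precompSort D r l) (precompSort D (r + 1) (Fin.snoc l j) x) x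
        (Pi.single j 1) := by
  intro r
  induction r with
  | zero => exact fun hr l j => hasLineDerivAt_precompSort_snoc_of_le hderiv hr finZeroElim
  | succ r ih =>
    intro hr l j x
    by_cases hj : ∀ i, l i ≤ j
    · exact hasLineDerivAt_precompSort_snoc_of_le hderiv hr hj x
    set s := l ∘ Tuple.sort l
    set t := Fin.init s
    set a := s (Fin.last r)
    have hsl : (List.ofFn s).Perm (List.ofFn l) := (Tuple.sort l).ofFn_comp_perm l
    have hta : ∀ i, t i ≤ a := fun i => Tuple.monotone_sort l (Fin.le_last i.castSucc)
    have hja : j ≤ a := by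
      obtain ⟨i, hi⟩ := not_forall.1 hj
      calc j ≤ l i := (not_le.1 hi).le
        _ = s ((Tuple.sort l).symm i) := by simp [s]
        _ ≤ a := Tuple.monotone_sort l (Fin.le_last _)
    have htja : ∀ k, (Fin.snoc t j : Fin (r + 1) → Fin n) k ≤ a := by
      intro k
      induction k using Fin.lastCases <;> simp [hja, hta]
    have hs : Fin.snoc t a = s := Fin.snoc_init_self s
    have hp : precompSort D (r + 1) l = precompSort D (r + 1) (Fin.snoc t a) :=
      precompSort_eq_of_perm (hs ▸ hsl.symm)
    have hw : precompSort D (r + 2) (Fin.snoc l j) =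
        precompSort D (r + 2) (Fin.snoc (Fin.snoc t j) a) := by
      refine precompSort_eq_of_perm ?_
      rw [← hs] at hsl
      simp only [List.ofFn_snoc, List.append_assoc] at hsl ⊢
      exact (hsl.symm.append_right _).trans (by
        rw [List.append_assoc]; exact List.perm_append_comm.append_left _)
    rw [hp, hw]
    exact hasLineDerivAt_symm_of_continuousAt
      (hasLineDerivAt_precompSort_snoc_of_le hderiv (by omega) hta)
      (ih (by omega) t j)
      (hasLineDerivAt_precompSort_snoc_of_le hderiv hr htja)
      (hcont _ (by omega) _ (Tuple.monotone_sort _)).continuousAt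

end Commutation

theorem stmt_9 {n m : ℕ} {E : Type*} [NormedAddCommGroup E] [NormedSpace ℝ E]
    (f : (Fin n → ℝ) → E)
    (D : (r : ℕ) → (Fin r → Fin n) → ((Fin n → ℝ) → E))
    (hD0 : ∀ l : Fin 0 → Fin n, D 0 l = f)
    (hderiv : ∀ r : ℕ, r < m → ∀ l : Fin (r + 1) → Fin n, Monotone l →
      ∀ x : Fin n → ℝ,
        HasLineDerivAt ℝ (D r (l ∘ Fin.castSucc)) (D (r + 1) l x) x
          (Pi.single (l (Fin.last r)) 1))
    (hcont : ∀ r : ℕ, r ≤ m → ∀ l : Fin r → Fin n, Monotone l → Continuous (D r l)) :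
    ContDiff ℝ (m : ℕ∞) f :=
  contDiff_of_hasLineDerivAt_snoc m (precompSort D) (fun _ => hD0 _)
    (hasLineDerivAt_precompSort_snoc hderiv hcont)
    fun r hr l => hcont r hr _ (Tuple.monotone_sort l)
end

section
/- Let X, Y be Banach spaces, U ⊆ X open, and R : U → Y a map whose Gateaux derivatives up to order k exist, are continuous in the point of U, and are multilinear in the directions. Then R is k times continuously Fréchet differentiable on U. -/
/-!
Applying the mean value inequality to `t ↦ G m (u + t • h) w` on `[0, 1]` bounds
`‖G m (u + h) w - G m u w - G (m + 1) u (Fin.cons h w)‖` by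
`sup_t ‖G (m + 1) (u + t • h) - G (m + 1) u‖ * ‖h‖ * ∏ i, ‖w i‖`. The bound is uniform in `w`,
so continuity of `G (m + 1)` makes `G (m + 1) u`, curried in its first argument, the Fréchet
derivative of `G m` at `u`. Hence `G` is a Taylor series of `R` up to order `k` on `U`.
-/

open Set Filter Topology

theorem HasLineDerivAt.hasDerivAt_add_smul_s10 {𝕜 E F : Type*} [NontriviallyNormedField 𝕜]
    [NormedAddCommGroup E] [NormedSpace 𝕜 E] [NormedAddCommGroup F] [NormedSpace 𝕜 F]
    {f : E → F} {f' : F} {x v : E} {t : 𝕜} (hf : HasLineDerivAt 𝕜 f f' (x + t • v) v) :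
    HasDerivAt (fun s : 𝕜 => f (x + s • v)) f' t := by
  have := HasDerivAt.comp_sub_const (f := fun s : 𝕜 => f (x + t • v + s • v)) t t
    (by rw [sub_self]; exact hf)
  convert this using 3 with s
  module

section Real

variable {E F : Type*} [NormedAddCommGroup E] [NormedSpace ℝ E]
  [NormedAddCommGroup F] [NormedSpace ℝ F]

theorem norm_sub_sub_le_of_hasLineDerivAt_segment {f f' : E → F} {x v : E} {C : ℝ}
    (hf : ∀ t ∈ Icc (0 : ℝ) 1, HasLineDerivAt ℝ f (f' (x + t • v)) (x + t • v) v)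
    (hC : ∀ t ∈ Icc (0 : ℝ) 1, ‖f' (x + t • v) - f' x‖ ≤ C) :
    ‖f (x + v) - f x - f' x‖ ≤ C := by
  have hderiv : ∀ t ∈ Icc (0 : ℝ) 1, HasDerivWithinAt (fun s : ℝ => f (x + s • v) - s • f' x)
      (f' (x + t • v) - f' x) (Icc 0 1) t := fun t ht =>
    ((hf t ht).hasDerivAt_add_smul_s10.sub ((hasDerivAt_id t).smul_const (f' x)) |>.hasDerivWithinAt
      |>.congr_deriv (by simp))
  simpa [sub_right_comm] using
    norm_image_sub_le_of_norm_deriv_le_segment_01' hderiv fun t ht => hC t (Ico_subset_Icc_self ht)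

theorem hasFDerivAt_of_hasLineDerivAt_of_continuousAt {m : ℕ}
    {G : E → ContinuousMultilinearMap ℝ (fun _ : Fin m => E) F}
    {G' : E → ContinuousMultilinearMap ℝ (fun _ : Fin (m + 1) => E) F} {x : E}
    (hG : ∀ᶠ y in 𝓝 x, ∀ v w, HasLineDerivAt ℝ (fun z => G z w) (G' y (Fin.cons v w)) y v)
    (hG' : ContinuousAt G' x) :
    HasFDerivAt G (G' x).curryLeft x := by
  rw [hasFDerivAt_iff_isLittleO_nhds_zero, Asymptotics.isLittleO_iff]
  intro c hc
  obtain ⟨δ, hδ, hball⟩ := Metric.eventually_nhds_iff_ball.1 <|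
    hG.and (hG'.eventually (Metric.closedBall_mem_nhds _ hc))
  filter_upwards [Metric.ball_mem_nhds 0 hδ] with h hh
  have hseg : ∀ t ∈ Icc (0 : ℝ) 1, x + t • h ∈ Metric.ball x δ := fun t ht => by
    rw [mem_ball_iff_norm, add_sub_cancel_left, norm_smul, Real.norm_of_nonneg ht.1]
    exact (mul_le_of_le_one_left (norm_nonneg h) ht.2).trans_lt (mem_ball_zero_iff.1 hh)
  refine ContinuousMultilinearMap.opNorm_le_bound (by positivity) fun w => ?_
  have key := norm_sub_sub_le_of_hasLineDerivAt_segment (f := fun z => G z w)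
    (f' := fun z => G' z (Fin.cons h w)) (x := x) (v := h) (C := c * ‖h‖ * ∏ i, ‖w i‖)
    (fun t ht => (hball _ (hseg t ht)).1 h w) fun t ht => by
      rw [← sub_apply]
      refine ((G' (x + t • h) - G' x).norm_map_cons_le h w).trans ?_
      gcongr
      simpa [dist_eq_norm] using (hball _ (hseg t ht)).2
  simpa using key

end Real

theorem stmt_10_general {X Y : Type*} [NormedAddCommGroup X] [NormedSpace ℝ X]
    [NormedAddCommGroup Y] [NormedSpace ℝ Y]
    (k : ℕ) (U : Set X) (hU : IsOpen U) (R : X → Y)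
    (G : (m : ℕ) → X → ContinuousMultilinearMap ℝ (fun _ : Fin m => X) Y)
    (hG0 : ∀ u : X, (G 0 u) 0 = R u)
    (hgateaux : ∀ m : ℕ, m < k → ∀ u ∈ U, ∀ v : X, ∀ w : Fin m → X,
      HasLineDerivAt ℝ (fun u' : X => G m u' w) (G (m + 1) u (Fin.cons v w)) u v)
    (hcont : ∀ m : ℕ, m ≤ k → ContinuousOn (fun u : X => G m u) U) :
    ContDiffOn ℝ (k : ℕ∞) R U := by
  refine HasFTaylorSeriesUpToOn.contDiffOn (f' := fun u m => G m u)
    ⟨fun u _ => hG0 u, fun m hm u hu => ?_, fun m hm => hcont m (by exact_mod_cast hm)⟩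
  have hm : m < k := by exact_mod_cast hm
  exact (hasFDerivAt_of_hasLineDerivAt_of_continuousAt
    (eventually_of_mem (hU.mem_nhds hu) fun y hy => hgateaux m hm y hy)
    ((hcont (m + 1) hm).continuousAt (hU.mem_nhds hu))).hasFDerivWithinAt

theorem stmt_10 {X Y : Type*} [NormedAddCommGroup X] [NormedSpace ℝ X] [CompleteSpace X]
    [NormedAddCommGroup Y] [NormedSpace ℝ Y] [CompleteSpace Y]
    (k : ℕ) (U : Set X) (hU : IsOpen U) (R : X → Y)
    (G : (m : ℕ) → X → ContinuousMultilinearMap ℝ (fun _ : Fin m => X) Y)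
    (hG0 : ∀ u : X, (G 0 u) 0 = R u)
    (hgateaux : ∀ m : ℕ, m < k → ∀ u ∈ U, ∀ v : X, ∀ w : Fin m → X,
      HasLineDerivAt ℝ (fun u' : X => G m u' w) (G (m + 1) u (Fin.cons v w)) u v)
    (hcont : ∀ m : ℕ, m ≤ k → ContinuousOn (fun u : X => G m u) U) :
    ContDiffOn ℝ (k : ℕ∞) R U :=
  stmt_10_general k U hU R G hG0 hgateaux hcont
end
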